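/- Let ι be a finite type, and let φ, φ' ∈ ℓ²(ι, ℂ) (i.e., EuclideanSpace over ι) be unit vectors with ⟨φ, φ'⟩ = 0. Let 0 ≤ ε̃ ≤ ε < 1 and define ψ := sqrt(1 − ε̃)·φ + sqrt(ε̃)·φ'. Define Ψ : ι × {0,1} → ℂ by Ψ(i, 0) := sqrt((1 − ε)/(1 − ε̃))·ψ(i) and Ψ(i, 1) := sqrt((ε − ε̃)/(1 − ε̃))·ψ(i), and define Φ : ι × {0,1} → ℂ by Φ(i, 0) := φ(i), Φ(i, 1) := 0. Then, in the Euclidean inner product space over ι × {0,1}: Ψ and Φ are unit vectors, ⟨Φ, Ψ⟩ = sqrt(1 − ε), and there exists a unit vector Φ⊥ with ⟨Φ, Φ⊥⟩ = 0 such that Ψ = sqrt(1 − ε)·Φ + sqrt(ε)·Φ⊥. (Fictitious-system step in the proof of Lemma 1: attaching an extra two-dimensional factor converts a decomposition with actual weight ε̃ ≤ ε into one with exactly the worst-case weight ε.) -/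

import Mathlib

/-!
With `e₀, e₁` the standard basis of `ℂ²` and `a = √((1-ε)/(1-ε̃))`, `b = √((ε-ε̃)/(1-ε̃))`,
we have `Ψ = ψ ⊗ (a e₀ + b e₁)` and `Φ = φ ⊗ e₀`, and inner products of product vectors factor.
Since `a² + b² = 1` and `‖ψ‖ = 1` by Pythagoras, both are unit vectors, and
`⟪Φ, Ψ⟫ = ⟪φ, ψ⟫ a = √(1-ε̃) a = √(1-ε)`. For unit vectors with `⟪Φ, Ψ⟫ = √(1-ε)` the remainder
`Ψ - √(1-ε) Φ` is orthogonal to `Φ` of norm `√ε`, so normalising it gives `Φ⊥`; when `ε = 0`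
we have `Ψ = Φ` and any unit vector orthogonal to `Φ`, such as `φ ⊗ e₁`, will do.
-/

open scoped InnerProductSpace ComplexInnerProductSpace

section Orthonormal

variable {𝕜 E : Type*} [RCLike 𝕜] [NormedAddCommGroup E] [InnerProductSpace 𝕜 E]

theorem norm_ofReal_smul_add_ofReal_smul_eq_one {x y : E} (hx : ‖x‖ = 1) (hy : ‖y‖ = 1)
    (hxy : ⟪x, y⟫_𝕜 = 0) {a b : ℝ} (hab : a ^ 2 + b ^ 2 = 1) :
    ‖(a : 𝕜) • x + (b : 𝕜) • y‖ = 1 := by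
  have hpyth := norm_add_sq_eq_norm_sq_add_norm_sq_of_inner_eq_zero (𝕜 := 𝕜)
    ((a : 𝕜) • x) ((b : 𝕜) • y) (by simp [inner_smul_left, inner_smul_right, hxy])
  simp only [norm_smul, RCLike.norm_ofReal, hx, hy] at hpyth
  have : ‖(a : 𝕜) • x + (b : 𝕜) • y‖ ^ 2 = 1 := by nlinarith [sq_abs a, sq_abs b]
  exact (pow_eq_one_iff_of_nonneg (norm_nonneg _) two_ne_zero).1 this

theorem exists_unit_orthogonal_decomposition {Φ Ψ : E} (hΦ : ‖Φ‖ = 1) (hΨ : ‖Ψ‖ = 1)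
    {ε : ℝ} (hε0 : 0 ≤ ε) (hε1 : ε ≤ 1) (hΦΨ : ⟪Φ, Ψ⟫_𝕜 = (√(1 - ε) : 𝕜))
    (hχ : ∃ χ : E, ‖χ‖ = 1 ∧ ⟪Φ, χ⟫_𝕜 = 0) :
    ∃ Φperp : E, ‖Φperp‖ = 1 ∧ ⟪Φ, Φperp⟫_𝕜 = 0 ∧
      Ψ = (√(1 - ε) : 𝕜) • Φ + (√ε : 𝕜) • Φperp := by
  rcases hε0.eq_or_lt with rfl | hεpos
  · obtain ⟨χ, hχ1, hΦχ⟩ := hχ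
    have : Φ = Ψ := (inner_eq_one_iff_of_norm_eq_one hΦ hΨ).1 (by simpa using hΦΨ)
    exact ⟨χ, hχ1, hΦχ, by simp [this]⟩
  set r := Ψ - (√(1 - ε) : 𝕜) • Φ
  have hΦr : ⟪Φ, r⟫_𝕜 = 0 := by
    simp [r, inner_sub_right, inner_smul_right, hΦΨ, inner_self_eq_norm_sq_to_K, hΦ]
  have hr : ‖r‖ = √ε := by
    have hpyth := norm_add_sq_eq_norm_sq_add_norm_sq_of_inner_eq_zero (𝕜 := 𝕜)
      ((√(1 - ε) : 𝕜) • Φ) r (by simp [inner_smul_left, hΦr])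
    rw [add_sub_cancel, norm_smul, RCLike.norm_ofReal, abs_of_nonneg (Real.sqrt_nonneg _), hΦ,
      hΨ] at hpyth
    rw [← Real.sqrt_mul_self (norm_nonneg r)]
    congr 1
    nlinarith [Real.mul_self_sqrt (sub_nonneg.2 hε1)]
  have hsqrt : (√ε : 𝕜) ≠ 0 := by simpa using (Real.sqrt_pos.2 hεpos).ne'
  refine ⟨(√ε : 𝕜)⁻¹ • r, ?_, ?_, ?_⟩
  · rw [norm_smul, norm_inv, RCLike.norm_ofReal, hr, abs_of_pos (Real.sqrt_pos.2 hεpos),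
      inv_mul_cancel₀ (Real.sqrt_pos.2 hεpos).ne']
  · simp [inner_smul_right, hΦr]
  · rw [smul_smul, mul_inv_cancel₀ hsqrt, one_smul, add_sub_cancel]

end Orthonormal

namespace EuclideanSpace

variable {𝕜 ι κ : Type*} [RCLike 𝕜]

def kron (u : EuclideanSpace 𝕜 ι) (v : EuclideanSpace 𝕜 κ) : EuclideanSpace 𝕜 (ι × κ) :=
  WithLp.toLp 2 fun p => u p.1 * v p.2

@[simp]
theorem kron_apply (u : EuclideanSpace 𝕜 ι) (v : EuclideanSpace 𝕜 κ) (p : ι × κ) :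
    kron u v p = u p.1 * v p.2 :=
  rfl

variable [Fintype ι] [Fintype κ]

theorem inner_kron (u u' : EuclideanSpace 𝕜 ι) (v v' : EuclideanSpace 𝕜 κ) :
    ⟪kron u v, kron u' v'⟫_𝕜 = ⟪u, u'⟫_𝕜 * ⟪v, v'⟫_𝕜 := by
  simp only [PiLp.inner_apply, kron_apply, RCLike.inner_apply, Fintype.sum_prod_type,
    Finset.sum_mul_sum, map_mul]
  exact Finset.sum_congr rfl fun _ _ => Finset.sum_congr rfl fun _ _ => by ring

theorem norm_kron (u : EuclideanSpace 𝕜 ι) (v : EuclideanSpace 𝕜 κ) :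
    ‖kron u v‖ = ‖u‖ * ‖v‖ := by
  have h := inner_kron u u v v
  simp only [inner_self_eq_norm_sq_to_K, ← mul_pow] at h
  exact (pow_left_inj₀ (norm_nonneg _) (by positivity) two_ne_zero).1 (by exact_mod_cast h)

end EuclideanSpace

/-- Fictitious-system step in the proof of Lemma 1: attaching an extra two-dimensional
factor (modelled by the index type `ι × Fin 2`) converts a decomposition
`ψ = sqrt(1 − ε̃) φ + sqrt(ε̃) φ'` with actual weight `ε̃ ≤ ε` into one with exactly the
worst-case weight `ε`: the vectors `Ψ` and `Φ` defined componentwise below are unit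
vectors with `⟪Φ, Ψ⟫ = sqrt(1 − ε)`, and `Ψ = sqrt(1 − ε) Φ + sqrt(ε) Φ⊥` for some unit
vector `Φ⊥` orthogonal to `Φ`. -/
theorem fictitious_system_step
    {ι : Type*} [Fintype ι]
    (φ φ' : EuclideanSpace ℂ ι) (hφ : ‖φ‖ = 1) (hφ' : ‖φ'‖ = 1)
    (horth : ⟪φ, φ'⟫ = 0)
    (εt ε : ℝ) (h0 : 0 ≤ εt) (h1 : εt ≤ ε) (h2 : ε < 1)
    (ψ : EuclideanSpace ℂ ι)
    (hψ : ψ = ((Real.sqrt (1 - εt) : ℝ) : ℂ) • φ + ((Real.sqrt εt : ℝ) : ℂ) • φ')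
    (Ψ Φ : EuclideanSpace ℂ (ι × Fin 2))
    (hΨ0 : ∀ i, Ψ (i, 0) = ((Real.sqrt ((1 - ε) / (1 - εt)) : ℝ) : ℂ) * ψ i)
    (hΨ1 : ∀ i, Ψ (i, 1) = ((Real.sqrt ((ε - εt) / (1 - εt)) : ℝ) : ℂ) * ψ i)
    (hΦ0 : ∀ i, Φ (i, 0) = φ i)
    (hΦ1 : ∀ i, Φ (i, 1) = 0) :
    ‖Ψ‖ = 1 ∧ ‖Φ‖ = 1 ∧ ⟪Φ, Ψ⟫ = ((Real.sqrt (1 - ε) : ℝ) : ℂ) ∧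
      ∃ Φperp : EuclideanSpace ℂ (ι × Fin 2), ‖Φperp‖ = 1 ∧ ⟪Φ, Φperp⟫ = 0 ∧
        Ψ = ((Real.sqrt (1 - ε) : ℝ) : ℂ) • Φ + ((Real.sqrt ε : ℝ) : ℂ) • Φperp := by
  have hεt : 0 < 1 - εt := by linarith
  set a := √((1 - ε) / (1 - εt))
  set b := √((ε - εt) / (1 - εt))
  set e₀ : EuclideanSpace ℂ (Fin 2) := EuclideanSpace.single 0 1
  set e₁ : EuclideanSpace ℂ (Fin 2) := EuclideanSpace.single 1 1
  have he₀ : ‖e₀‖ = 1 := by simp [e₀]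
  have he₁ : ‖e₁‖ = 1 := by simp [e₁]
  have he₀₁ : ⟪e₀, e₁⟫ = 0 := by simp [e₀, e₁, EuclideanSpace.inner_single_left]
  have hψ_norm : ‖ψ‖ = 1 := hψ ▸ norm_ofReal_smul_add_ofReal_smul_eq_one hφ hφ' horth
    (by rw [Real.sq_sqrt hεt.le, Real.sq_sqrt h0]; ring)
  have hv_norm : ‖(a : ℂ) • e₀ + (b : ℂ) • e₁‖ = 1 := norm_ofReal_smul_add_ofReal_smul_eq_one
    he₀ he₁ he₀₁ (by
      rw [Real.sq_sqrt (div_nonneg (by linarith) hεt.le),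
        Real.sq_sqrt (div_nonneg (by linarith) hεt.le)]
      field_simp
      ring)
  have hΨ : Ψ = EuclideanSpace.kron ψ ((a : ℂ) • e₀ + (b : ℂ) • e₁) := by
    ext ⟨i, j⟩; fin_cases j <;> simp [hΨ0, hΨ1, e₀, e₁, mul_comm]
  have hΦ : Φ = EuclideanSpace.kron φ e₀ := by
    ext ⟨i, j⟩; fin_cases j <;> simp [hΦ0, hΦ1, e₀]
  have hΨ_norm : ‖Ψ‖ = 1 := by rw [hΨ, EuclideanSpace.norm_kron, hψ_norm, hv_norm, one_mul]
  have hΦ_norm : ‖Φ‖ = 1 := by rw [hΦ, EuclideanSpace.norm_kron, hφ, he₀, one_mul]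
  have hΦΨ : ⟪Φ, Ψ⟫ = ((√(1 - ε) : ℝ) : ℂ) := by
    have hφψ : ⟪φ, ψ⟫ = ((√(1 - εt) : ℝ) : ℂ) := by
      simp [hψ, horth, inner_self_eq_norm_sq_to_K, hφ]
    have he₀v : ⟪e₀, (a : ℂ) • e₀ + (b : ℂ) • e₁⟫ = a := by
      simp [he₀₁, inner_self_eq_norm_sq_to_K, he₀]
    rw [hΦ, hΨ, EuclideanSpace.inner_kron, hφψ, he₀v, ← Complex.ofReal_mul, ← Real.sqrt_mul hεt.le,
      mul_div_cancel₀ _ hεt.ne']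
  exact ⟨hΨ_norm, hΦ_norm, hΦΨ, exists_unit_orthogonal_decomposition hΦ_norm hΨ_norm (by linarith)
    h2.le hΦΨ ⟨EuclideanSpace.kron φ e₁, by rw [EuclideanSpace.norm_kron, hφ, he₁, one_mul],
      by rw [hΦ, EuclideanSpace.inner_kron, he₀₁, mul_zero]⟩⟩
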